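/- Let G be a countable discrete group, X a locally compact Hausdorff space with a proper, cocompact G-action, c a cut-off function on X (compactly supported, continuous, nonnegative, with ∑_{h∈G} c(h⁻¹·x)² = 1 for every x), and π : C₀(X) → B(H) a nondegenerate covariant representation on the G-Hilbert space H. Define V : H → ℓ²(G, H) by (Vv)_h = π(c) u_h v. Then V is a well-defined linear isometry; its adjoint is given by V*((ξ_h)_{h∈G}) = ∑_{h∈G} u_h⁻¹ π(c) ξ_h, the sum converging in H; and V intertwines the right-translation representation with u: R_g V = V u_g for every g ∈ G, where (R_g ξ)_h = ξ_{hg}. -/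

import Mathlib

/-!
The partial sums `ψ_F = cutoffSum c F = ∑_{h ∈ F} h · c²` form a bounded approximate unit of
`C₀(X)`: their norm is at most `1`, and by properness only finitely many translates `h · c` meet a
given compact set, so `ψ_F = 1` there once `F` is large. Nondegeneracy of `π` turns this into
strong convergence `π(ψ_F) → 1`, while covariance gives
`⟪π(ψ_F) v, v⟫ = ∑_{h ∈ F} ‖π(c) u_h⁻¹ v‖²`; hence `∑_h ‖π(c) u_h v‖² = ‖v‖²`, i.e. `V` is an
isometry. Its adjoint is read off on the standard basis vectors of `ℓ²`, and `R_g V = V u_g` is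
`u_{hg} = u_h u_g`.
-/

open scoped ZeroAtInfty
open Filter MeasureTheory Topology

noncomputable section

variable {G : Type*} [Group G] [Countable G] [TopologicalSpace G] [DiscreteTopology G]
variable {X : Type*} [TopologicalSpace X] [LocallyCompactSpace X] [T2Space X]
variable [MulAction G X] [ContinuousConstSMul G X]
variable {H : Type*} [NormedAddCommGroup H] [InnerProductSpace ℂ H] [CompleteSpace H]
  [SecondCountableTopology H]

/-- The translation action of `G` on `C₀(X, ℂ)`: `(g • φ)(x) = φ(g⁻¹ • x)`. -/
def C0smul (g : G) (φ : C₀(X, ℂ)) : C₀(X, ℂ) where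
  toFun := fun x => φ (g⁻¹ • x)
  continuous_toFun := φ.continuous.comp (continuous_const_smul g⁻¹)
  zero_at_infty' := φ.zero_at_infty'.comp
    ((Homeomorph.smul (g⁻¹ : G)).toCocompactMap.cocompact_tendsto')

/-- Conjugation `g(T) = u_g T u_g⁻¹` by the unitary representation `u`. -/
def conjU (u : G →* unitary (H →L[ℂ] H)) (g : G) (T : H →L[ℂ] H) : H →L[ℂ] H :=
  (u g : H →L[ℂ] H) * T * ((u g⁻¹ : unitary (H →L[ℂ] H)) : H →L[ℂ] H)

/-- The Hilbert space `ℓ²(G, H)`. -/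
abbrev l2GH (G H : Type*) [NormedAddCommGroup H] [InnerProductSpace ℂ H] : Type _ :=
  lp (fun _ : G => H) 2

namespace lp

section compEquiv

variable {𝕜 ι κ E : Type*} [NormedField 𝕜] [NormedAddCommGroup E] [NormedSpace 𝕜 E]
  {p : ENNReal}

theorem _root_.Memℓp.comp_equiv {f : ι → E} (hf : Memℓp f p) (e : κ ≃ ι) : Memℓp (f ∘ e) p := by
  rcases p.trichotomy with rfl | rfl | hp
  · exact memℓp_zero ((memℓp_zero_iff.mp hf).preimage e.injective.injOn)
  · rw [memℓp_infty_iff] at hf ⊢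
    exact e.surjective.range_comp (fun i => ‖f i‖) ▸ hf
  · exact memℓp_gen (e.summable_iff.mpr ((memℓp_gen_iff hp).mp hf))

variable [Fact (1 ≤ p)]

def compEquiv (e : κ ≃ ι) : lp (fun _ : ι => E) p →ₗᵢ[𝕜] lp (fun _ : κ => E) p where
  toFun ξ := ⟨ξ ∘ e, (lp.memℓp ξ).comp_equiv e⟩
  map_add' _ _ := rfl
  map_smul' _ _ := rfl
  norm_map' ξ := by
    rcases p.trichotomy with rfl | rfl | hp
    · exact absurd (Fact.out : (1 : ENNReal) ≤ 0) (by norm_num)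
    · rw [lp.norm_eq_ciSup, lp.norm_eq_ciSup]
      exact e.iSup_comp (g := fun i => ‖ξ i‖)
    · rw [lp.norm_eq_tsum_rpow hp, lp.norm_eq_tsum_rpow hp]
      exact congrArg (· ^ _) (e.tsum_eq fun i => ‖ξ i‖ ^ p.toReal)

@[simp]
theorem compEquiv_apply (e : κ ≃ ι) (ξ : lp (fun _ : ι => E) p) (k : κ) :
    compEquiv (𝕜 := 𝕜) e ξ k = ξ (e k) := rfl

end compEquiv

section linearIsometryOfHasSum

variable {𝕜 ι E F : Type*} [RCLike 𝕜] [NormedAddCommGroup E] [NormedSpace 𝕜 E]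
  [NormedAddCommGroup F] [NormedSpace 𝕜 F]

theorem hasSum_norm_sq (ξ : lp (fun _ : ι => F) 2) : HasSum (fun i => ‖ξ i‖ ^ 2) (‖ξ‖ ^ 2) := by
  simpa using lp.hasSum_norm (by norm_num : (0 : ℝ) < (2 : ENNReal).toReal) ξ

def linearIsometryOfHasSumNormSq (T : ι → E →L[𝕜] F)
    (hT : ∀ v, HasSum (fun i => ‖T i v‖ ^ 2) (‖v‖ ^ 2)) : E →ₗᵢ[𝕜] lp (fun _ : ι => F) 2 where
  toFun v := ⟨fun i => T i v, memℓp_gen (by simpa using (hT v).summable)⟩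
  map_add' v w := lp.ext <| funext fun i => map_add (T i) v w
  map_smul' a v := lp.ext <| funext fun i => map_smul (T i) a v
  norm_map' v := by
    refine (sq_eq_sq₀ (norm_nonneg _) (norm_nonneg _)).mp ((hasSum_norm_sq _).unique ?_)
    exact hT v

@[simp]
theorem linearIsometryOfHasSumNormSq_apply (T : ι → E →L[𝕜] F)
    (hT : ∀ v, HasSum (fun i => ‖T i v‖ ^ 2) (‖v‖ ^ 2)) (v : E) (i : ι) :
    linearIsometryOfHasSumNormSq T hT v i = T i v := rfl

end linearIsometryOfHasSum

section adjoint

variable {𝕜 ι E F : Type*} [RCLike 𝕜] [NormedAddCommGroup E] [InnerProductSpace 𝕜 E]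
  [CompleteSpace E] [NormedAddCommGroup F] [InnerProductSpace 𝕜 F] [CompleteSpace F]

open ContinuousLinearMap in
theorem hasSum_adjoint_linearIsometryOfHasSumNormSq_apply (T : ι → E →L[𝕜] F)
    (hT : ∀ v, HasSum (fun i => ‖T i v‖ ^ 2) (‖v‖ ^ 2)) (ξ : lp (fun _ : ι => F) 2) :
    HasSum (fun i => adjoint (T i) (ξ i))
      (adjoint (linearIsometryOfHasSumNormSq T hT).toContinuousLinearMap ξ) := by
  classical
  set V := (linearIsometryOfHasSumNormSq T hT).toContinuousLinearMap
  have hsingle (i : ι) (w : F) : adjoint V (lp.single 2 i w) = adjoint (T i) w :=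
    ext_inner_right 𝕜 fun v => by
      rw [adjoint_inner_left, adjoint_inner_left, lp.inner_single_left]
      rfl
  simpa only [hsingle] using (lp.hasSum_single ENNReal.ofNat_ne_top ξ).mapL (adjoint V)

end adjoint

end lp

section approximateUnit

open scoped CStarAlgebra

variable {A E : Type*} [NonUnitalCStarAlgebra A] [NormedAddCommGroup E] [InnerProductSpace ℂ E]
  [CompleteSpace E]

theorem NonUnitalStarAlgHom.tendsto_apply_of_tendsto_mul (π : A →⋆ₙₐ[ℂ] (E →L[ℂ] E))
    (hπ : Dense (Submodule.span ℂ (Set.range fun p : A × E => π p.1 p.2) : Set E))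
    {ι : Type*} {l : Filter ι} {e : ι → A} (he_bdd : ∃ C, ∀ i, ‖e i‖ ≤ C)
    (he : ∀ a, Tendsto (fun i => e i * a) l (𝓝 a)) (v : E) :
    Tendsto (fun i => π (e i) v) l (𝓝 v) := by
  obtain ⟨C, hC⟩ := he_bdd
  have hequi : Equicontinuous fun i => ⇑(π (e i)) :=
    ((NormedSpace.equicontinuous_TFAE fun i => π (e i)).out 5 1).mp
      (⟨C, fun i => (NonUnitalStarAlgHom.norm_apply_le π (e i)).trans (hC i)⟩ :
        ∃ C, ∀ i, ‖π (e i)‖ ≤ C)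
  have hclosed : IsClosed {v | Tendsto (fun i => π (e i) v) l (𝓝 v)} :=
    hequi.isClosed_setOfPred_tendsto continuous_id
  refine closure_minimal (fun w hw => ?_) hclosed (hπ.closure_eq ▸ Set.mem_univ v)
  induction hw using Submodule.span_induction with
  | mem _ hw =>
    obtain ⟨⟨a, w⟩, rfl⟩ := hw
    have hcont : Continuous fun b : A => π b w := (continuous_eval_const w).comp (map_continuous π)
    simpa only [Set.mem_ofPred_eq, Function.comp_def, map_mul, mul_apply_eq_comp] using
      (hcont.tendsto a).comp (he a)
  | zero => simpa using tendsto_const_nhds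
  | add _ _ _ _ hx hy => simpa using hx.add hy
  | smul r _ _ hx => simpa using hx.const_smul r

end approximateUnit

section cutoff

variable {Γ Y : Type*} [Group Γ] [TopologicalSpace Y] [MulAction Γ Y]

theorem finite_setOf_inv_smul_mem_of_isProperMap [TopologicalSpace Γ] [DiscreteTopology Γ]
    (hproper : IsProperMap fun p : Γ × Y => (p.1 • p.2, p.2)) {K L : Set Y} (hK : IsCompact K)
    (hL : IsCompact L) : {γ : Γ | ∃ x ∈ K, γ⁻¹ • x ∈ L}.Finite := by
  have hfin := ((hproper.isCompact_preimage (hL.prod hK)).image continuous_fst).finite_of_discrete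
  refine (hfin.preimage inv_injective.injOn).subset ?_
  rintro γ ⟨x, hxK, hxL⟩
  exact ⟨(γ⁻¹, x), ⟨hxL, hxK⟩, rfl⟩

variable {c : C₀(Y, ℂ)}

theorem hasSum_norm_sq_of_im_eq_zero (hc_real : ∀ x, (c x).im = 0)
    (hc_sum : ∀ x, HasSum (fun h : Γ => c (h⁻¹ • x) ^ 2) 1) (x : Y) :
    HasSum (fun h : Γ => ‖c (h⁻¹ • x)‖ ^ 2) 1 := by
  have hre := Complex.reCLM.hasSum (hc_sum x)
  simp only [Complex.reCLM_apply, Complex.one_re] at hre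
  convert hre using 2 with h
  rw [Complex.sq_norm, Complex.normSq_apply, sq, Complex.mul_re, hc_real, mul_zero, add_zero,
    sub_zero]

variable [ContinuousConstSMul Γ Y]

@[simp]
theorem C0smul_apply (g : Γ) (φ : C₀(Y, ℂ)) (x : Y) : C0smul g φ x = φ (g⁻¹ • x) := rfl

def cutoffSum (c : C₀(Y, ℂ)) (F : Finset Γ) : C₀(Y, ℂ) := ∑ h ∈ F, C0smul h (c * c)

theorem cutoffSum_apply (c : C₀(Y, ℂ)) (F : Finset Γ) (x : Y) :
    cutoffSum c F x = ∑ h ∈ F, c (h⁻¹ • x) ^ 2 := by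
  classical
  induction F using Finset.induction_on with
  | empty => simp [cutoffSum]
  | insert h F hh ih =>
    simp only [cutoffSum, Finset.sum_insert hh] at ih ⊢
    rw [ZeroAtInftyContinuousMap.add_apply, ih, C0smul_apply, ZeroAtInftyContinuousMap.mul_apply,
      sq]

theorem norm_cutoffSum_apply_le (hc_real : ∀ x, (c x).im = 0)
    (hc_sum : ∀ x, HasSum (fun h : Γ => c (h⁻¹ • x) ^ 2) 1) (F : Finset Γ) (x : Y) :
    ‖cutoffSum c F x‖ ≤ 1 :=
  calc ‖cutoffSum c F x‖ ≤ ∑ h ∈ F, ‖c (h⁻¹ • x)‖ ^ 2 := by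
        rw [cutoffSum_apply]
        exact (norm_sum_le _ _).trans_eq (by simp only [norm_pow])
    _ ≤ 1 := sum_le_hasSum F (fun _ _ => by positivity)
        (hasSum_norm_sq_of_im_eq_zero hc_real hc_sum x)

theorem norm_cutoffSum_le (hc_real : ∀ x, (c x).im = 0)
    (hc_sum : ∀ x, HasSum (fun h : Γ => c (h⁻¹ • x) ^ 2) 1) (F : Finset Γ) :
    ‖cutoffSum c F‖ ≤ 1 := by
  rw [← ZeroAtInftyContinuousMap.norm_toBCF_eq_norm]
  exact (BoundedContinuousFunction.norm_le zero_le_one).mpr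
    (norm_cutoffSum_apply_le hc_real hc_sum F)

theorem cutoffSum_apply_eq_one (hc_sum : ∀ x, HasSum (fun h : Γ => c (h⁻¹ • x) ^ 2) 1)
    {F : Finset Γ} {x : Y} (hF : ∀ h ∉ F, c (h⁻¹ • x) = 0) : cutoffSum c F x = 1 := by
  rw [cutoffSum_apply]
  exact (hasSum_sum_of_ne_finset_zero fun h hh => by simp [hF h hh]).unique (hc_sum x)

theorem tendsto_cutoffSum_mul [TopologicalSpace Γ] [DiscreteTopology Γ]
    (hproper : IsProperMap fun p : Γ × Y => (p.1 • p.2, p.2)) (hcs : HasCompactSupport c)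
    (hc_real : ∀ x, (c x).im = 0) (hc_sum : ∀ x, HasSum (fun h : Γ => c (h⁻¹ • x) ^ 2) 1)
    (φ : C₀(Y, ℂ)) : Tendsto (fun F : Finset Γ => cutoffSum c F * φ) atTop (𝓝 φ) := by
  rw [Metric.tendsto_nhds]
  intro ε hε
  obtain ⟨K, hK, hKφ⟩ := mem_cocompact.mp
    (φ.zero_at_infty' (Metric.closedBall_mem_nhds 0 (by positivity : 0 < ε / 3)))
  have hfin := finite_setOf_inv_smul_mem_of_isProperMap hproper hK hcs
  filter_upwards [eventually_ge_atTop hfin.toFinset] with F hF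
  rw [dist_eq_norm, ← ZeroAtInftyContinuousMap.norm_toBCF_eq_norm]
  refine lt_of_le_of_lt ((BoundedContinuousFunction.norm_le (by positivity)).mpr fun x => ?_)
    (by linarith : 2 * (ε / 3) < ε)
  change ‖cutoffSum c F x * φ x - φ x‖ ≤ 2 * (ε / 3)
  by_cases hx : x ∈ K
  · have hF1 : cutoffSum c F x = 1 := cutoffSum_apply_eq_one hc_sum fun h hh => by
      by_contra hne
      exact hh (hF (hfin.mem_toFinset.mpr ⟨x, hx, subset_tsupport _ hne⟩))
    simp only [hF1, one_mul, sub_self, norm_zero]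
    positivity
  · have hφx : ‖φ x‖ ≤ ε / 3 := by simpa using hKφ hx
    calc ‖cutoffSum c F x * φ x - φ x‖ ≤ ‖cutoffSum c F x‖ * ‖φ x‖ + ‖φ x‖ := by
          exact (norm_sub_le _ _).trans_eq (by rw [norm_mul])
      _ ≤ 1 * (ε / 3) + ε / 3 := by
          gcongr
          exact norm_cutoffSum_apply_le hc_real hc_sum F x
      _ = 2 * (ε / 3) := by ring

end cutoff

section covariant

open ContinuousLinearMap

variable {Γ Y E : Type*} [Group Γ] [TopologicalSpace Y] [MulAction Γ Y] [ContinuousConstSMul Γ Y]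
  [NormedAddCommGroup E] [InnerProductSpace ℂ E] [CompleteSpace E]

theorem adjoint_coe_unitary_map (u : Γ →* unitary (E →L[ℂ] E)) (g : Γ) :
    adjoint (u g : E →L[ℂ] E) = (u g⁻¹ : E →L[ℂ] E) := by
  rw [← star_eq_adjoint, ← Unitary.coe_star, Unitary.star_eq_inv, map_inv]

theorem re_inner_map_C0smul_mul_self (u : Γ →* unitary (E →L[ℂ] E))
    (π : C₀(Y, ℂ) →⋆ₙₐ[ℂ] (E →L[ℂ] E))
    (hcov : ∀ (g : Γ) (φ : C₀(Y, ℂ)),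
      (u g : E →L[ℂ] E) * π φ * ((u g⁻¹ : unitary (E →L[ℂ] E)) : E →L[ℂ] E) = π (C0smul g φ))
    {c : C₀(Y, ℂ)} (hc : IsSelfAdjoint c) (g : Γ) (v : E) :
    (inner ℂ (π (C0smul g (c * c)) v) v).re = ‖π c ((u g⁻¹ : E →L[ℂ] E) v)‖ ^ 2 := by
  set w := (u g⁻¹ : E →L[ℂ] E) v
  have hπc : adjoint (π c) = π c := (hc.map π).adjoint_eq
  calc (inner ℂ (π (C0smul g (c * c)) v) v).re
      = (inner ℂ ((u g : E →L[ℂ] E) (π c (π c w))) v).re := by rw [← hcov, map_mul]; rfl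
    _ = (inner ℂ (π c (π c w)) w).re := by rw [← adjoint_inner_right, adjoint_coe_unitary_map]
    _ = (inner ℂ (π c w) (π c w)).re := by rw [← adjoint_inner_right, hπc]
    _ = ‖π c w‖ ^ 2 := inner_self_eq_norm_sq (𝕜 := ℂ) _

theorem isSelfAdjoint_of_im_eq_zero {c : C₀(Y, ℂ)} (hc_real : ∀ x, (c x).im = 0) :
    IsSelfAdjoint c := by
  ext x
  exact Complex.conj_eq_iff_im.mpr (hc_real x)

theorem hasSum_norm_sq_map_cutoff_unitary [TopologicalSpace Γ] [DiscreteTopology Γ]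
    (u : Γ →* unitary (E →L[ℂ] E)) (π : C₀(Y, ℂ) →⋆ₙₐ[ℂ] (E →L[ℂ] E))
    (hπ : Dense (Submodule.span ℂ (Set.range fun p : C₀(Y, ℂ) × E => π p.1 p.2) : Set E))
    (hcov : ∀ (g : Γ) (φ : C₀(Y, ℂ)),
      (u g : E →L[ℂ] E) * π φ * ((u g⁻¹ : unitary (E →L[ℂ] E)) : E →L[ℂ] E) = π (C0smul g φ))
    (hproper : IsProperMap fun p : Γ × Y => (p.1 • p.2, p.2))
    {c : C₀(Y, ℂ)} (hcs : HasCompactSupport c) (hc_real : ∀ x, (c x).im = 0)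
    (hc_sum : ∀ x, HasSum (fun h : Γ => c (h⁻¹ • x) ^ 2) 1) (v : E) :
    HasSum (fun h : Γ => ‖π c ((u h : E →L[ℂ] E) v)‖ ^ 2) (‖v‖ ^ 2) := by
  have hc := isSelfAdjoint_of_im_eq_zero hc_real
  have hpartial (F : Finset Γ) :
      (inner ℂ (π (cutoffSum c F) v) v).re = ∑ h ∈ F, ‖π c ((u h⁻¹ : E →L[ℂ] E) v)‖ ^ 2 := by
    simp only [cutoffSum, map_sum, sum_apply, sum_inner, Complex.re_sum,
      re_inner_map_C0smul_mul_self u π hcov hc]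
  have hlim := π.tendsto_apply_of_tendsto_mul hπ ⟨1, norm_cutoffSum_le hc_real hc_sum⟩
    (tendsto_cutoffSum_mul hproper hcs hc_real hc_sum) v
  have hre := (Complex.continuous_re.tendsto _).comp
    (hlim.inner (𝕜 := ℂ) (tendsto_const_nhds (x := v)))
  simp only [Function.comp_def, hpartial] at hre
  have hinv : HasSum (fun h : Γ => ‖π c ((u h⁻¹ : E →L[ℂ] E) v)‖ ^ 2) (‖v‖ ^ 2) := by
    rw [← inner_self_eq_norm_sq (𝕜 := ℂ) v]
    exact hre
  exact (Equiv.inv Γ).hasSum_iff.mp hinv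

end covariant

theorem statement_12_general
    (u : G →* unitary (H →L[ℂ] H))
    (π : C₀(X, ℂ) →⋆ₙₐ[ℂ] (H →L[ℂ] H))
    (hπnd : Dense (Submodule.span ℂ (Set.range fun p : C₀(X, ℂ) × H => π p.1 p.2) : Set H))
    (hcov : ∀ (g : G) (φ : C₀(X, ℂ)),
      (u g : H →L[ℂ] H) * π φ * ((u g⁻¹ : unitary (H →L[ℂ] H)) : H →L[ℂ] H) = π (C0smul g φ))
    (hproper : IsProperMap fun p : G × X => (p.1 • p.2, p.2))
    (c : C₀(X, ℂ)) (hcs : HasCompactSupport (⇑c))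
    (hc_real : ∀ x : X, (c x).im = 0)
    (hc_sum : ∀ x : X, HasSum (fun h : G => c (h⁻¹ • x) ^ 2) 1) :
    ∃ V : H →L[ℂ] l2GH G H,
      (∀ v : H, ‖V v‖ = ‖v‖) ∧
      (∀ (v : H) (h : G), (V v) h = π c ((u h : H →L[ℂ] H) v)) ∧
      (∀ ξ : l2GH G H,
        HasSum (fun h : G => (u h⁻¹ : H →L[ℂ] H) (π c (ξ h)))
          ((ContinuousLinearMap.adjoint V) ξ)) ∧
      (∀ g : G, ∃ R : l2GH G H →L[ℂ] l2GH G H,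
        (∀ (ξ : l2GH G H) (h : G), (R ξ) h = ξ (h * g)) ∧
        R.comp V = V.comp ((u g : H →L[ℂ] H))) := by
  let T (h : G) : H →L[ℂ] H := π c ∘L (u h : H →L[ℂ] H)
  have hT : ∀ v, HasSum (fun h => ‖T h v‖ ^ 2) (‖v‖ ^ 2) :=
    hasSum_norm_sq_map_cutoff_unitary u π hπnd hcov hproper hcs hc_real hc_sum
  have hT_adjoint (h : G) :
      ContinuousLinearMap.adjoint (T h) = (u h⁻¹ : H →L[ℂ] H) ∘L π c := by
    rw [ContinuousLinearMap.adjoint_comp, adjoint_coe_unitary_map,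
      ((isSelfAdjoint_of_im_eq_zero hc_real).map π).adjoint_eq]
  let V := lp.linearIsometryOfHasSumNormSq T hT
  refine ⟨V.toContinuousLinearMap, V.norm_map, fun _ _ => rfl, fun ξ => ?_, fun g =>
    ⟨(lp.compEquiv (𝕜 := ℂ) (Equiv.mulRight g)).toContinuousLinearMap, fun _ _ => rfl, ?_⟩⟩
  · simpa only [hT_adjoint, ContinuousLinearMap.comp_apply] using
      lp.hasSum_adjoint_linearIsometryOfHasSumNormSq_apply T hT ξ
  · ext v h
    simp [V, T]

theorem statement_12
    (u : G →* unitary (H →L[ℂ] H))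
    (π : C₀(X, ℂ) →⋆ₙₐ[ℂ] (H →L[ℂ] H))
    (hπnd : Dense (Submodule.span ℂ (Set.range fun p : C₀(X, ℂ) × H => π p.1 p.2) : Set H))
    (hcov : ∀ (g : G) (φ : C₀(X, ℂ)),
      (u g : H →L[ℂ] H) * π φ * ((u g⁻¹ : unitary (H →L[ℂ] H)) : H →L[ℂ] H) = π (C0smul g φ))
    (hproper : IsProperMap fun p : G × X => (p.1 • p.2, p.2))
    (hcocompact : CompactSpace (Quotient (MulAction.orbitRel G X)))
    (c : C₀(X, ℂ)) (hcs : HasCompactSupport (⇑c))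
    (hc_real : ∀ x : X, (c x).im = 0) (hc_nonneg : ∀ x : X, 0 ≤ (c x).re)
    (hc_sum : ∀ x : X, HasSum (fun h : G => c (h⁻¹ • x) ^ 2) 1) :
    ∃ V : H →L[ℂ] l2GH G H,
      (∀ v : H, ‖V v‖ = ‖v‖) ∧
      (∀ (v : H) (h : G), (V v) h = π c ((u h : H →L[ℂ] H) v)) ∧
      (∀ ξ : l2GH G H,
        HasSum (fun h : G => (u h⁻¹ : H →L[ℂ] H) (π c (ξ h)))
          ((ContinuousLinearMap.adjoint V) ξ)) ∧
      (∀ g : G, ∃ R : l2GH G H →L[ℂ] l2GH G H,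
        (∀ (ξ : l2GH G H) (h : G), (R ξ) h = ξ (h * g)) ∧
        R.comp V = V.comp ((u g : H →L[ℂ] H))) :=
  statement_12_general u π hπnd hcov hproper c hcs hc_real hc_sum

end
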